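/- In the 3D dKP case (v = 0): the vector fields X̃ = ∂_x − (λ² − u)∂_t − (u_t λ + u_y)∂_λ and Ỹ = ∂_y − λ∂_t − u_t∂_λ on ℝ⁴ commute, [X̃,Ỹ] = 0, if and only if u satisfies the dKP equation u_{xt} + (u u_t)_t − u_{yy} = 0. -/

import Mathlib

/-- Partial derivative in the `i`-th coordinate direction on `ℝ⁴`. -/
noncomputable def pd (i : Fin 4) (f : (Fin 4 → ℝ) → ℝ) (p : Fin 4 → ℝ) : ℝ :=
  fderiv ℝ f p (Pi.single i 1)

/-- Lie bracket of vector fields on `ℝ⁴`. -/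
noncomputable def lie (X Y : (Fin 4 → ℝ) → (Fin 4 → ℝ)) (p : Fin 4 → ℝ) : Fin 4 → ℝ :=
  fderiv ℝ Y p (X p) - fderiv ℝ X p (Y p)

lemma contDiff_pd {f : (Fin 4 → ℝ) → ℝ} (hf : ContDiff ℝ (⊤ : ℕ∞) f) (i : Fin 4) :
    ContDiff ℝ (⊤ : ℕ∞) (pd i f) :=
  ((hf.fderiv_right (by simp)).clm_apply contDiff_const)

lemma dirD (f : (Fin 4 → ℝ) → ℝ) (p v : Fin 4 → ℝ) :
    fderiv ℝ f p v = ∑ i, v i * pd i f p := by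
  have hv : v = ∑ i : Fin 4, v i • (Pi.single i 1 : Fin 4 → ℝ) := by
    funext j
    simp [Finset.sum_apply, Pi.single_apply]
  conv_lhs => rw [hv]
  rw [map_sum]
  simp [pd, smul_eq_mul]

lemma pd_const (i : Fin 4) (c : ℝ) (p : Fin 4 → ℝ) : pd i (fun _ => c) p = 0 := by
  simp [pd]

lemma pd_neg (i : Fin 4) (f : (Fin 4 → ℝ) → ℝ) (p : Fin 4 → ℝ) :
    pd i (fun q => -(f q)) p = -(pd i f p) := by
  simp [pd, fderiv_neg]

lemma pd_proj (i j : Fin 4) (p : Fin 4 → ℝ) :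
    pd i (fun q : Fin 4 → ℝ => q j) p = if j = i then 1 else 0 := by
  have h : (fun q : Fin 4 → ℝ => q j) = (ContinuousLinearMap.proj j : (Fin 4 → ℝ) →L[ℝ] ℝ) := rfl
  rw [pd, h, ContinuousLinearMap.fderiv]
  simp [Pi.single_apply]

lemma pd_mul {f g : (Fin 4 → ℝ) → ℝ} (hf : ContDiff ℝ (⊤ : ℕ∞) f) (hg : ContDiff ℝ (⊤ : ℕ∞) g)
    (i : Fin 4) (p : Fin 4 → ℝ) :
    pd i (fun q => f q * g q) p = pd i f p * g p + f p * pd i g p := by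
  rw [pd, fderiv_fun_mul (hf.differentiable (by simp) p) (hg.differentiable (by simp) p)]
  simp [pd, smul_eq_mul]
  ring

lemma pd_add {f g : (Fin 4 → ℝ) → ℝ} (hf : ContDiff ℝ (⊤ : ℕ∞) f) (hg : ContDiff ℝ (⊤ : ℕ∞) g)
    (i : Fin 4) (p : Fin 4 → ℝ) :
    pd i (fun q => f q + g q) p = pd i f p + pd i g p := by
  rw [pd, fderiv_fun_add (hf.differentiable (by simp) p) (hg.differentiable (by simp) p)]
  simp [pd]

lemma pd_symm {f : (Fin 4 → ℝ) → ℝ} (hf : ContDiff ℝ (⊤ : ℕ∞) f) (i j : Fin 4) (p : Fin 4 → ℝ) :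
    pd i (pd j f) p = pd j (pd i f) p := by
  have hdf : ContDiff ℝ (⊤ : ℕ∞) (fderiv ℝ f) := hf.fderiv_right (by simp)
  have key : ∀ a b : Fin 4,
      pd a (pd b f) p = fderiv ℝ (fderiv ℝ f) p (Pi.single a 1) (Pi.single b 1) := by
    intro a b
    have h : pd b f = fun q => (fderiv ℝ f q) ((fun _ => (Pi.single b 1 : Fin 4 → ℝ)) q) := rfl
    rw [pd, h, fderiv_clm_apply (hdf.differentiable (by simp) p) (differentiableAt_const _)]
    simp
  rw [key i j, key j i]
  exact second_derivative_symmetric (fun y => (hf.differentiable (by simp) y).hasFDerivAt)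
    ((hdf.differentiable (by simp) p).hasFDerivAt) _ _

lemma fderiv_apply_comm {X : (Fin 4 → ℝ) → (Fin 4 → ℝ)} {p : Fin 4 → ℝ}
    (hX : DifferentiableAt ℝ X p) (v : Fin 4 → ℝ) (i : Fin 4) :
    fderiv ℝ X p v i = fderiv ℝ (fun q => X q i) p v := by
  have h : (fun q => X q i) = (ContinuousLinearMap.proj i : (Fin 4 → ℝ) →L[ℝ] ℝ) ∘ X := rfl
  rw [h, fderiv_comp p (ContinuousLinearMap.proj i : (Fin 4 → ℝ) →L[ℝ] ℝ).differentiableAt hX]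
  simp


/-- dKP Lax pair: with coordinates `(x,y,t,λ)` (indices `0,1,2,3`) and `u` a smooth
function of `(x,y,t)` (independent of `λ`), the vector fields
`X̃ = ∂_x − (λ² − u)∂_t − (u_t λ + u_y)∂_λ` and `Ỹ = ∂_y − λ∂_t − u_t∂_λ` commute,
`[X̃,Ỹ] = 0`, if and only if `u` satisfies the dKP equation
`u_{xt} + (u u_t)_t − u_{yy} = 0`. -/
theorem stmt13 (u : (Fin 4 → ℝ) → ℝ) (hu : ContDiff ℝ (⊤ : ℕ∞) u)
    (hul : ∀ p, pd 3 u p = 0)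
    (X Y : (Fin 4 → ℝ) → (Fin 4 → ℝ))
    (hX : ∀ p, X p = ![1, 0, -((p 3) ^ 2 - u p), -(pd 2 u p * p 3 + pd 1 u p)])
    (hY : ∀ p, Y p = ![0, 1, -(p 3), -(pd 2 u p)]) :
    (∀ p, lie X Y p = 0) ↔
      (∀ p, pd 0 (pd 2 u) p + pd 2 (fun q => u q * pd 2 u q) p - pd 1 (pd 1 u) p = 0) := by
  have hXe : X = fun p => ![1, 0, -((p 3) ^ 2 - u p), -(pd 2 u p * p 3 + pd 1 u p)] := funext hX
  have hYe : Y = fun p => ![0, 1, -(p 3), -(pd 2 u p)] := funext hY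
  subst hXe hYe
  have hu1 : ContDiff ℝ (⊤ : ℕ∞) (pd 1 u) := contDiff_pd hu 1
  have hu2 : ContDiff ℝ (⊤ : ℕ∞) (pd 2 u) := contDiff_pd hu 2
  have hd1 := hu1.differentiable (by simp)
  have hd2 := hu2.differentiable (by simp)
  have hdu := hu.differentiable (by simp)
  have hproj : ContDiff ℝ (⊤ : ℕ∞) (fun q : Fin 4 → ℝ => q 3) :=
    (ContinuousLinearMap.proj 3 : (Fin 4 → ℝ) →L[ℝ] ℝ).contDiff
  have hprojd := hproj.differentiable (by simp)
  have hXd : Differentiable ℝ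
      (fun p : Fin 4 → ℝ => ![(1:ℝ), 0, -((p 3) ^ 2 - u p), -(pd 2 u p * p 3 + pd 1 u p)]) := by
    intro p
    rw [differentiableAt_pi]
    intro i
    fin_cases i <;> simp <;> fun_prop
  have hYd : Differentiable ℝ (fun p : Fin 4 → ℝ => ![(0:ℝ), 1, -(p 3), -(pd 2 u p)]) := by
    intro p
    rw [differentiableAt_pi]
    intro i
    fin_cases i <;> simp <;> fun_prop
  have h2Y : ∀ (i : Fin 4) p, pd i (fun q : Fin 4 → ℝ => -(q 3)) p
      = -(if (3:Fin 4) = i then 1 else 0) := by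
    intro i p
    rw [pd_neg, pd_proj]
  have h3Y : ∀ (i : Fin 4) p, pd i (fun q => -(pd 2 u q)) p = -(pd i (pd 2 u) p) := by
    intro i p
    rw [pd_neg]
  have h2X : ∀ (i : Fin 4) p, pd i (fun q : Fin 4 → ℝ => -((q 3) ^ 2 - u q)) p
      = pd i u p - 2 * p 3 * (if (3:Fin 4) = i then 1 else 0) := by
    intro i p
    have e : (fun q : Fin 4 → ℝ => -((q 3) ^ 2 - u q))
        = fun q => u q + ((fun q : Fin 4 → ℝ => -(q 3)) q * (fun q : Fin 4 → ℝ => q 3) q) := by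
      funext q; ring
    rw [e, pd_add hu (hproj.neg.mul hproj), pd_mul hproj.neg hproj, pd_proj, h2Y]
    ring
  have h3X : ∀ (i : Fin 4) p, pd i (fun q => -(pd 2 u q * q 3 + pd 1 u q)) p
      = -(pd i (pd 2 u) p * p 3 + pd 2 u p * (if (3:Fin 4) = i then 1 else 0)
          + pd i (pd 1 u) p) := by
    intro i p
    have e : (fun q : Fin 4 → ℝ => -(pd 2 u q * q 3 + pd 1 u q))
        = fun q => -((fun q => pd 2 u q * (fun q : Fin 4 → ℝ => q 3) q) q + pd 1 u q) := rfl
    rw [e, pd_neg, pd_add (hu2.mul hproj) hu1, pd_mul hu2 hproj, pd_proj]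
    try ring
  have hz : pd 3 u = fun _ => (0:ℝ) := funext hul
  have h30 : ∀ (j : Fin 4) p, pd 3 (pd j u) p = 0 := by
    intro j p
    rw [pd_symm hu 3 j p, hz, pd_const]
  have key : ∀ p, lie (fun p => ![1, 0, -((p 3) ^ 2 - u p), -(pd 2 u p * p 3 + pd 1 u p)])
      (fun p => ![0, 1, -(p 3), -(pd 2 u p)]) p
      = ![0, 0, 0, -(pd 0 (pd 2 u) p + pd 2 (fun q => u q * pd 2 u q) p - pd 1 (pd 1 u) p)] := by
    intro p
    have hsym12 := pd_symm hu 1 2 p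
    have hmul := pd_mul hu hu2 2 p
    funext i
    rw [lie]
    simp only [Pi.sub_apply]
    rw [fderiv_apply_comm (hYd p) _ i, fderiv_apply_comm (hXd p) _ i]
    fin_cases i
    · simp only [Fin.reduceFinMk, Matrix.cons_val_zero, Matrix.cons_val_one, Matrix.cons_val_two,
        Matrix.cons_val_three, Matrix.tail_cons, Matrix.head_cons, Matrix.head_fin_const]
      rw [dirD, dirD]
      simp [Fin.sum_univ_four, pd_const]
    · simp only [Fin.reduceFinMk, Matrix.cons_val_zero, Matrix.cons_val_one, Matrix.cons_val_two,
        Matrix.cons_val_three, Matrix.tail_cons, Matrix.head_cons, Matrix.head_fin_const]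
      rw [dirD, dirD]
      simp [Fin.sum_univ_four, pd_const]
    · simp only [Fin.reduceFinMk, Matrix.cons_val_zero, Matrix.cons_val_one, Matrix.cons_val_two,
        Matrix.cons_val_three, Matrix.tail_cons, Matrix.head_cons, Matrix.head_fin_const]
      rw [dirD, dirD]
      simp only [Fin.sum_univ_four, Fin.reduceFinMk, Matrix.cons_val_zero, Matrix.cons_val_one, Matrix.cons_val_two,
        Matrix.cons_val_three, Matrix.tail_cons, Matrix.head_cons, Matrix.head_fin_const]
      rw [h2Y 0 p, h2Y 1 p, h2Y 2 p, h2Y 3 p, h2X 0 p, h2X 1 p, h2X 2 p, h2X 3 p]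
      have h3u := hul p
      simp only [Fin.isValue, Fin.reduceEq, ↓reduceIte]
      rw [h3u]
      ring
    · simp only [Fin.reduceFinMk, Matrix.cons_val_zero, Matrix.cons_val_one, Matrix.cons_val_two,
        Matrix.cons_val_three, Matrix.tail_cons, Matrix.head_cons, Matrix.head_fin_const]
      rw [dirD, dirD]
      simp only [Fin.sum_univ_four, Fin.reduceFinMk, Matrix.cons_val_zero, Matrix.cons_val_one, Matrix.cons_val_two,
        Matrix.cons_val_three, Matrix.tail_cons, Matrix.head_cons, Matrix.head_fin_const]
      rw [h3Y 0 p, h3Y 1 p, h3Y 2 p, h3Y 3 p, h3X 0 p, h3X 1 p, h3X 2 p, h3X 3 p]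
      simp only [h30, hmul, hsym12]
      have h3u := hul p
      simp only [Fin.isValue, Fin.reduceEq, ↓reduceIte]
      ring_nf
  constructor
  · intro h p
    have := congrFun ((key p).symm.trans (h p)) 3
    simp at this
    linarith
  · intro h p
    rw [key p, h p]
    funext i
    fin_cases i <;> simp
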